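/- arXiv:1312.1704 — 3 statements merged into one kernel-verified Lean document; each statement's English description precedes it below -/
import Mathlib

section
/- The inverse limit of an inverse sequence of hereditarily indecomposable continua with surjective bonding maps is hereditarily indecomposable. -/
/-!
The inverse limit is the intersection of the directed family of sets `coherentBelow f i`
of threads that are coherent below `i`; each is a continuous image of the full product, hence a
nonempty compact connected set, and a directed intersection of such sets in a Hausdorff space is
again nonempty, compact and connected.

For hereditary indecomposability, if a subcontinuum `A` of the limit were the union of two
proper subcontinua `B` and `C`, pick `b ∈ A \ C` and `c ∈ A \ B`. By compactness some projection
already separates `b` from `C`, and some projection separates `c` from `B`; a common later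
projection does both, so it decomposes the image of `A` in a hereditarily indecomposable factor.
-/

def HerIndec (Y : Type*) [TopologicalSpace Y] : Prop :=
  ∀ A : Set Y, IsCompact A → IsConnected A →
    ¬ ∃ B C : Set Y, IsCompact B ∧ IsConnected B ∧ IsCompact C ∧ IsConnected C ∧
        B ∪ C = A ∧ B ≠ A ∧ C ≠ A

open Set

theorem IsPreconnected.iInter_of_directed {α ι : Type*} [TopologicalSpace α] [T2Space α]
    [Nonempty ι] {S : ι → Set α} (hdir : Directed (· ⊇ ·) S) (hS : ∀ i, IsCompact (S i))
    (hconn : ∀ i, IsPreconnected (S i)) : IsPreconnected (⋂ i, S i) := by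
  -- Disjoint closed pieces of the intersection have disjoint open neighbourhoods, and by
  -- compactness these already cover some `S i`, which they would then disconnect.
  have hK : IsCompact (⋂ i, S i) :=
    (hS (Classical.arbitrary ι)).of_isClosed_subset (isClosed_iInter fun i => (hS i).isClosed)
      (iInter_subset _ _)
  rw [isPreconnected_closed_iff]
  intro F F' hF hF' hsub hneF hneF'
  by_contra! hdisj
  obtain ⟨U, V, hU, hV, hFU, hF'V, hUV⟩ := SeparatedNhds.of_isCompact_isCompact
    (hK.inter_right hF) (hK.inter_right hF') (by
      rw [disjoint_iff_inter_eq_empty, ← not_nonempty_iff_eq_empty]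
      rintro ⟨x, ⟨hxK, hxF⟩, -, hxF'⟩
      exact hdisj.subset ⟨hxK, hxF, hxF'⟩)
  obtain ⟨i, hi⟩ : ∃ i, S i ⊆ U ∪ V := by
    refine exists_subset_nhds_of_isCompact hdir hS fun x hx => (hU.union hV).mem_nhds ?_
    rcases hsub hx with hxF | hxF'
    exacts [Or.inl (hFU ⟨hx, hxF⟩), Or.inr (hF'V ⟨hx, hxF'⟩)]
  obtain ⟨x, -, hxU, hxV⟩ := hconn i U V hU hV hi
    (hneF.mono fun x hx => ⟨iInter_subset _ i hx.1, hFU hx⟩)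
    (hneF'.mono fun x hx => ⟨iInter_subset _ i hx.1, hF'V hx⟩)
  exact hUV.le_bot ⟨hxU, hxV⟩

section Separating

variable {T ι : Type*} {X : ι → Type*} {π : ∀ i, T → X i}

theorem apply_notMem_image_of_ker_le {i k : ι} (hki : Setoid.ker (π k) ≤ Setoid.ker (π i))
    {C : Set T} {b : T} (hb : π i b ∉ π i '' C) : π k b ∉ π k '' C :=
  fun ⟨c, hc, hcb⟩ => hb ⟨c, hc, Setoid.le_def.mp hki hcb⟩

variable [TopologicalSpace T] [∀ i, TopologicalSpace (X i)]

theorem IsCompact.exists_apply_notMem_image [Nonempty ι] [∀ i, T1Space (X i)]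
    (hπ : ∀ i, Continuous (π i)) (hinj : Function.Injective fun t i => π i t)
    (hdir : Directed (· ≥ ·) fun i => Setoid.ker (π i)) {C : Set T} (hC : IsCompact C) {b : T}
    (hb : b ∉ C) : ∃ i, π i b ∉ π i '' C := by
  let fiber i := π i ⁻¹' {π i b}
  have hfiber : ⋂ i, fiber i = {b} :=
    Subset.antisymm (fun a ha => hinj (funext (mem_iInter.mp ha)))
      (singleton_subset_iff.mpr (mem_iInter.mpr fun i => rfl))
  obtain ⟨i, hi⟩ := hC.elim_directed_family_closed fiber
    (fun i => isClosed_singleton.preimage (hπ i))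
    (by rw [hfiber, inter_singleton_eq_empty]; exact hb)
    fun i j => (hdir i j).imp fun _ hk =>
      ⟨fun _ ha => Setoid.le_def.mp hk.1 ha, fun _ ha => Setoid.le_def.mp hk.2 ha⟩
  exact ⟨i, fun ⟨c, hc, hcb⟩ => hi.subset ⟨hc, hcb⟩⟩

theorem HerIndec.of_separating [Nonempty ι] [∀ i, T1Space (X i)] (hX : ∀ i, HerIndec (X i))
    (hπ : ∀ i, Continuous (π i)) (hinj : Function.Injective fun t i => π i t)
    (hdir : Directed (· ≥ ·) fun i => Setoid.ker (π i)) : HerIndec T := by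
  rintro A hAc hAconn ⟨B, C, hBc, hBconn, hCc, hCconn, rfl, hBA, hCA⟩
  obtain ⟨b, hbA, hbC⟩ := exists_of_ssubset (subset_union_right.ssubset_of_ne hCA)
  obtain ⟨c, hcA, hcB⟩ := exists_of_ssubset (subset_union_left.ssubset_of_ne hBA)
  obtain ⟨i₁, hi₁⟩ := hCc.exists_apply_notMem_image hπ hinj hdir hbC
  obtain ⟨i₂, hi₂⟩ := hBc.exists_apply_notMem_image hπ hinj hdir hcB
  obtain ⟨k, hk₁, hk₂⟩ := hdir i₁ i₂
  have hb := apply_notMem_image_of_ker_le hk₁ hi₁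
  have hc := apply_notMem_image_of_ker_le hk₂ hi₂
  refine hX k _ (hAc.image (hπ k)) (hAconn.image _ (hπ k).continuousOn)
    ⟨π k '' B, π k '' C, hBc.image (hπ k), hBconn.image _ (hπ k).continuousOn,
      hCc.image (hπ k), hCconn.image _ (hπ k).continuousOn, image_union _ _ _ |>.symm, ?_, ?_⟩
  · exact fun h => hc (h ▸ mem_image_of_mem (π k) hcA)
  · exact fun h => hb (h ▸ mem_image_of_mem (π k) hbA)

end Separating

section InverseLimit

variable {ι : Type*} [Preorder ι] {X : ι → Type*} (f : ∀ i j : ι, i ≤ j → X j → X i)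

def invLimit : Set (∀ i, X i) := {x | ∀ (i j : ι) (h : i ≤ j), x i = f i j h (x j)}

def coherentBelow (i : ι) : Set (∀ j, X j) := {x | ∀ j (h : j ≤ i), x j = f j i h (x i)}

open scoped Classical in
noncomputable def extendBelow (i : ι) (x : ∀ j, X j) : ∀ j, X j :=
  fun j => if h : j ≤ i then f j i h (x i) else x j

theorem invLimit_eq_iInter_coherentBelow : invLimit f = ⋂ i, coherentBelow f i := by
  ext x
  simp only [invLimit, coherentBelow, mem_iInter, mem_ofPred_eq]
  exact ⟨fun hx i j hji => hx j i hji, fun hx i j hij => hx j i hij⟩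

theorem coherentBelow_subset_of_le
    (hcomp : ∀ (i j k : ι) (hij : i ≤ j) (hjk : j ≤ k),
      f i k (hij.trans hjk) = f i j hij ∘ f j k hjk) {i k : ι} (hik : i ≤ k) :
    coherentBelow f k ⊆ coherentBelow f i := fun x hx j hji => by
  rw [hx j (hji.trans hik), hx i hik, hcomp j i k hji hik, Function.comp_apply]

theorem directed_coherentBelow [IsDirected ι (· ≤ ·)]
    (hcomp : ∀ (i j k : ι) (hij : i ≤ j) (hjk : j ≤ k),
      f i k (hij.trans hjk) = f i j hij ∘ f j k hjk) :
    Directed (· ⊇ ·) (coherentBelow f) := fun i j =>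
  let ⟨k, hik, hjk⟩ := directed_of (· ≤ ·) i j
  ⟨k, coherentBelow_subset_of_le f hcomp hik, coherentBelow_subset_of_le f hcomp hjk⟩

theorem range_extendBelow (hid : ∀ i : ι, f i i le_rfl = id) (i : ι) :
    range (extendBelow f i) = coherentBelow f i := by
  ext x
  constructor
  · rintro ⟨y, rfl⟩ j hji
    simp only [extendBelow, dif_pos hji, dif_pos le_rfl, hid i, id]
  · intro hx
    refine ⟨x, funext fun j => ?_⟩
    by_cases hji : j ≤ i
    · rw [extendBelow, dif_pos hji, hx j hji]
    · rw [extendBelow, dif_neg hji]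

theorem ker_apply_le_of_le {i k : ι} (hik : i ≤ k) :
    Setoid.ker (fun x : invLimit f => x.1 k) ≤ Setoid.ker (fun x : invLimit f => x.1 i) :=
  Setoid.le_def.mpr fun {x y} hxy => by
    simp only [Setoid.ker_def] at hxy ⊢
    rw [x.2 i k hik, y.2 i k hik, hxy]

variable [∀ i, TopologicalSpace (X i)]

theorem continuous_extendBelow (hcont : ∀ (i j : ι) (h : i ≤ j), Continuous (f i j h))
    (i : ι) : Continuous (extendBelow f i) := by
  refine continuous_pi fun j => ?_
  by_cases hji : j ≤ i
  · simp only [extendBelow, dif_pos hji]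
    exact (hcont j i hji).comp (continuous_apply i)
  · simp only [extendBelow, dif_neg hji]
    exact continuous_apply j

theorem isClosed_invLimit [∀ i, T2Space (X i)]
    (hcont : ∀ (i j : ι) (h : i ≤ j), Continuous (f i j h)) : IsClosed (invLimit f) := by
  simp only [invLimit, ofPred_forall]
  exact isClosed_iInter fun i => isClosed_iInter fun j => isClosed_iInter fun h =>
    isClosed_eq (continuous_apply i) ((hcont i j h).comp (continuous_apply j))

theorem isCompact_coherentBelow [∀ i, CompactSpace (X i)]
    (hcont : ∀ (i j : ι) (h : i ≤ j), Continuous (f i j h)) (hid : ∀ i : ι, f i i le_rfl = id)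
    (i : ι) : IsCompact (coherentBelow f i) :=
  range_extendBelow f hid i ▸ isCompact_range (continuous_extendBelow f hcont i)

theorem nonempty_invLimit [Nonempty ι] [IsDirected ι (· ≤ ·)] [∀ i, T2Space (X i)]
    [∀ i, CompactSpace (X i)] [∀ i, Nonempty (X i)]
    (hcont : ∀ (i j : ι) (h : i ≤ j), Continuous (f i j h)) (hid : ∀ i : ι, f i i le_rfl = id)
    (hcomp : ∀ (i j k : ι) (hij : i ≤ j) (hjk : j ≤ k),
      f i k (hij.trans hjk) = f i j hij ∘ f j k hjk) :
    (invLimit f).Nonempty := by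
  rw [invLimit_eq_iInter_coherentBelow]
  exact IsCompact.nonempty_iInter_of_directed_nonempty_isCompact_isClosed _
    (directed_coherentBelow f hcomp) (fun i => range_extendBelow f hid i ▸ range_nonempty _)
    (isCompact_coherentBelow f hcont hid) fun i => (isCompact_coherentBelow f hcont hid i).isClosed

theorem isPreconnected_invLimit [Nonempty ι] [IsDirected ι (· ≤ ·)] [∀ i, T2Space (X i)]
    [∀ i, CompactSpace (X i)] [∀ i, PreconnectedSpace (X i)]
    (hcont : ∀ (i j : ι) (h : i ≤ j), Continuous (f i j h)) (hid : ∀ i : ι, f i i le_rfl = id)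
    (hcomp : ∀ (i j k : ι) (hij : i ≤ j) (hjk : j ≤ k),
      f i k (hij.trans hjk) = f i j hij ∘ f j k hjk) :
    IsPreconnected (invLimit f) := by
  rw [invLimit_eq_iInter_coherentBelow]
  exact .iInter_of_directed (directed_coherentBelow f hcomp) (isCompact_coherentBelow f hcont hid)
    fun i => range_extendBelow f hid i ▸ isPreconnected_range (continuous_extendBelow f hcont i)

theorem herIndec_invLimit [Nonempty ι] [IsDirected ι (· ≤ ·)] [∀ i, T1Space (X i)]
    (hX : ∀ i, HerIndec (X i)) : HerIndec (invLimit f) :=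
  HerIndec.of_separating hX (fun i => (continuous_apply i).comp continuous_subtype_val)
    (fun _ _ h => Subtype.ext (funext (congrFun h))) fun i j =>
      let ⟨k, hik, hjk⟩ := directed_of (· ≤ ·) i j
      ⟨k, ker_apply_le_of_le f hik, ker_apply_le_of_le f hjk⟩

end InverseLimit

theorem stmt13_general (ι : Type*) [Preorder ι] [IsDirected ι (· ≤ ·)] [Nonempty ι]
    (X : ι → Type*) [∀ i, TopologicalSpace (X i)] [∀ i, T2Space (X i)]
    [∀ i, CompactSpace (X i)] [∀ i, ConnectedSpace (X i)]
    (hHI : ∀ i, HerIndec (X i))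
    (f : ∀ i j : ι, i ≤ j → X j → X i)
    (hcont : ∀ (i j : ι) (h : i ≤ j), Continuous (f i j h))
    (hid : ∀ i : ι, f i i le_rfl = id)
    (hcomp : ∀ (i j k : ι) (hij : i ≤ j) (hjk : j ≤ k),
      f i k (hij.trans hjk) = f i j hij ∘ f j k hjk) :
    Nonempty {x : ∀ i, X i // ∀ (i j : ι) (h : i ≤ j), x i = f i j h (x j)} ∧
    CompactSpace {x : ∀ i, X i // ∀ (i j : ι) (h : i ≤ j), x i = f i j h (x j)} ∧
    ConnectedSpace {x : ∀ i, X i // ∀ (i j : ι) (h : i ≤ j), x i = f i j h (x j)} ∧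
    T2Space {x : ∀ i, X i // ∀ (i j : ι) (h : i ≤ j), x i = f i j h (x j)} ∧
    HerIndec {x : ∀ i, X i // ∀ (i j : ι) (h : i ≤ j), x i = f i j h (x j)} := by
  have hne := nonempty_invLimit f hcont hid hcomp
  exact ⟨hne.to_subtype, isCompact_iff_compactSpace.mp (isClosed_invLimit f hcont).isCompact,
    Subtype.connectedSpace ⟨hne, isPreconnected_invLimit f hcont hid hcomp⟩, inferInstance,
    herIndec_invLimit f hHI⟩

/-- The inverse limit of an inverse system of hereditarily indecomposable continua
with surjective bonding maps is a hereditarily indecomposable continuum. -/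
theorem stmt13 (ι : Type*) [Preorder ι] [IsDirected ι (· ≤ ·)] [Nonempty ι]
    (X : ι → Type*) [∀ i, TopologicalSpace (X i)] [∀ i, T2Space (X i)]
    [∀ i, CompactSpace (X i)] [∀ i, Nonempty (X i)] [∀ i, ConnectedSpace (X i)]
    (hHI : ∀ i, HerIndec (X i))
    (f : ∀ i j : ι, i ≤ j → X j → X i)
    (hcont : ∀ (i j : ι) (h : i ≤ j), Continuous (f i j h))
    (hid : ∀ i : ι, f i i le_rfl = id)
    (hcomp : ∀ (i j k : ι) (hij : i ≤ j) (hjk : j ≤ k),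
      f i k (hij.trans hjk) = f i j hij ∘ f j k hjk)
    (hsurj : ∀ (i j : ι) (h : i ≤ j), Function.Surjective (f i j h)) :
    Nonempty {x : ∀ i, X i // ∀ (i j : ι) (h : i ≤ j), x i = f i j h (x j)} ∧
    CompactSpace {x : ∀ i, X i // ∀ (i j : ι) (h : i ≤ j), x i = f i j h (x j)} ∧
    ConnectedSpace {x : ∀ i, X i // ∀ (i j : ι) (h : i ≤ j), x i = f i j h (x j)} ∧
    T2Space {x : ∀ i, X i // ∀ (i j : ι) (h : i ≤ j), x i = f i j h (x j)} ∧
    HerIndec {x : ∀ i, X i // ∀ (i j : ι) (h : i ≤ j), x i = f i j h (x j)} :=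
  stmt13_general ι X hHI f hcont hid hcomp
end

section
/- A continuum admitting two long order arcs in its hyperspace that are not order-isomorphic admits no Whitney map. -/
noncomputable section

variable (X : Type) [TopologicalSpace X]

/-- The Vietoris topology on the collection of all subsets of `X`, generated by the
sets `{A | A ⊆ U}` and `{A | A ∩ U ≠ ∅}` for `U` open. -/
def vietoris : TopologicalSpace (Set X) :=
  TopologicalSpace.generateFrom
    ({S | ∃ U : Set X, IsOpen U ∧ S = {A : Set X | A ⊆ U}} ∪
      {S | ∃ U : Set X, IsOpen U ∧ S = {A : Set X | (A ∩ U).Nonempty}})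

/-- The hyperspace of subcontinua of `X`. -/
def CX : Type := {A : Set X // IsCompact A ∧ IsConnected A}

/-- The hyperspace carries the (subspace) Vietoris topology. -/
instance : TopologicalSpace (CX X) := TopologicalSpace.induced Subtype.val (vietoris X)

/-- The hyperspace is partially ordered by inclusion. -/
instance : PartialOrder (CX X) :=
  inferInstanceAs (PartialOrder {A : Set X // IsCompact A ∧ IsConnected A})

/-- The singleton `{x}` as a subcontinuum. -/
def sgl (x : X) : CX X := ⟨{x}, isCompact_singleton, isConnected_singleton⟩

/-- The whole space as a subcontinuum. -/
def whole [CompactSpace X] [ConnectedSpace X] [Nonempty X] : CX X :=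
  ⟨Set.univ, isCompact_univ, isConnected_univ⟩

variable [CompactSpace X] [ConnectedSpace X] [Nonempty X]

/-- A long order arc in the hyperspace: a subcontinuum of `C(X)` linearly ordered by
inclusion containing the whole space and some singleton. -/
def IsLongOrderArc (𝒜 : Set (CX X)) : Prop :=
  IsCompact 𝒜 ∧ IsConnected 𝒜 ∧
    (∀ A ∈ 𝒜, ∀ B ∈ 𝒜, A.1 ⊆ B.1 ∨ B.1 ⊆ A.1) ∧
    (∃ x : X, sgl X x ∈ 𝒜) ∧ whole X ∈ 𝒜

/-!
A Whitney map `μ` is strictly monotone for inclusion, so its restriction to an order arc `𝒜`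
(a chain) is an order embedding into `J`. Since `𝒜` is connected and contains a singleton and
`X`, its image under `μ` is a connected subset of `J` containing `min J` and `max J`, hence all of
`J`. Thus every long order arc is order-isomorphic to `J`, and any two of them are isomorphic.
-/

open Set

theorem IsChain.nonempty_orderIso_of_strictMonoOn {α β : Type*} [PartialOrder α] [LinearOrder β]
    {s : Set α} (hs : IsChain (· ≤ ·) s) {f : α → β} (hf : StrictMonoOn f s)
    (hsurj : SurjOn f s univ) : Nonempty (s ≃o β) := by
  classical
  let := hs.linearOrder
  refine ⟨StrictMono.orderIsoOfSurjective (s.domRestrict f) (fun a b hab => hf a.2 b.2 hab) ?_⟩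
  intro y
  obtain ⟨a, ha, rfl⟩ := hsurj (mem_univ y)
  exact ⟨⟨a, ha⟩, rfl⟩

theorem IsPreconnected.surjOn_univ_of_isBot_of_isTop {α β : Type*} [TopologicalSpace α]
    [LinearOrder β] [TopologicalSpace β] [OrderClosedTopology β] {s : Set α}
    (hs : IsPreconnected s) {f : α → β} (hf : ContinuousOn f s) {a b : α} (ha : a ∈ s)
    (hb : b ∈ s) (hbot : IsBot (f a)) (htop : IsTop (f b)) : SurjOn f s univ :=
  fun y _ => (hs.image f hf).Icc_subset (mem_image_of_mem f ha) (mem_image_of_mem f hb)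
    ⟨hbot y, htop y⟩

section

variable {X}

theorem IsLongOrderArc.isChain {𝒜 : Set (CX X)} (h𝒜 : IsLongOrderArc X 𝒜) :
    IsChain (· ≤ ·) 𝒜 :=
  fun A hA B hB _ => h𝒜.2.2.1 A hA B hB

theorem IsLongOrderArc.nonempty_orderIso {𝒜 : Set (CX X)} (h𝒜 : IsLongOrderArc X 𝒜)
    {J : Type*} [LinearOrder J] [TopologicalSpace J] [OrderClosedTopology J] {μ : CX X → J}
    (hμ : Continuous μ) (hμ_mono : StrictMono μ) (hbot : ∀ x, IsBot (μ (sgl X x)))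
    (htop : IsTop (μ (whole X))) : Nonempty (𝒜 ≃o J) := by
  have hchain := h𝒜.isChain
  obtain ⟨-, hconn, -, ⟨x, hx⟩, hwhole⟩ := h𝒜
  exact hchain.nonempty_orderIso_of_strictMonoOn (hμ_mono.strictMonoOn 𝒜)
    (hconn.isPreconnected.surjOn_univ_of_isBot_of_isTop hμ.continuousOn hx hwhole (hbot x) htop)

end

theorem stmt15
    (𝒜₀ 𝒜₁ : Set (CX X)) (h0 : IsLongOrderArc X 𝒜₀) (h1 : IsLongOrderArc X 𝒜₁)
    (hnotiso : IsEmpty (↥𝒜₀ ≃o ↥𝒜₁))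
    (J : Type) [LinearOrder J] [TopologicalSpace J] [OrderTopology J]
    (jmin jmax : J) (hjmin : ∀ j : J, jmin ≤ j) (hjmax : ∀ j : J, j ≤ jmax)
    (μ : CX X → J) :
    ¬ (Continuous μ ∧ (∀ x : X, μ (sgl X x) = jmin) ∧
        (∀ A B : CX X, A.1 ⊂ B.1 → μ A < μ B) ∧ μ (whole X) = jmax) := by
  rintro ⟨hμ, hmin, hstrict, hmax⟩
  have hbot : ∀ x, IsBot (μ (sgl X x)) := fun x => hmin x ▸ hjmin
  have htop : IsTop (μ (whole X)) := hmax ▸ hjmax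
  obtain ⟨e₀⟩ := h0.nonempty_orderIso hμ hstrict hbot htop
  obtain ⟨e₁⟩ := h1.nonempty_orderIso hμ hstrict hbot htop
  exact hnotiso.false (e₀.trans e₁.symm)
end
end

section
/- In the hyperspace of a continuum, every maximal chain of subcontinua (under inclusion) from a singleton to the whole space that is closed in the Vietoris topology is an order arc: it is compact and connected. -/
noncomputable section

variable (X : Type) [TopologicalSpace X]

variable [CompactSpace X] [ConnectedSpace X] [Nonempty X]

/-!
`𝒜` is compact as a closed subset of `C(X)`, and `C(X)` is compact: it is a closed subspace of
the compact Vietoris hyperspace of nonempty compacta, because a Vietoris limit of connected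
compacta is connected (a separation of the limit by disjoint open sets is seen by all sets nearby).

For connectedness, cover `𝒜` by closed sets `P ∋ p` and `Q ∋ q` with `p ⊆ q`. The closure `m` of
the union of the members of `𝒜 ∩ P` below `q` is a Vietoris limit of them, so `m ∈ P`; dually the
intersection `n` of the members of `𝒜 ∩ Q` above `m` lies in `Q`. If `P` and `Q` do not meet on
`𝒜`, then `m ⊊ n` and no member of `𝒜` lies strictly between them. But boundary bumping yields a
continuum strictly between `m` and `n`, and maximality of the chain then puts a member of `𝒜` there.
-/

open Set TopologicalSpace Topology

attribute [local instance] TopologicalSpace.vietoris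

section Vietoris

variable {α : Type*} [TopologicalSpace α]

theorem sUnion_mem_closure_vietoris {𝒮 : Set (Set α)} (hn : 𝒮.Nonempty)
    (hd : DirectedOn (· ⊆ ·) 𝒮) : ⋃₀ 𝒮 ∈ closure 𝒮 := by
  rw [vietoris.isTopologicalBasis.mem_closure_iff, forall_mem_image]
  rintro u ⟨hu, -⟩ ⟨hsub, hmeet⟩
  choose x hx𝒮 hxU using fun U : u => hmeet U U.2
  have := hu.to_subtype
  obtain ⟨t, ht, hxt⟩ := hd.exists_mem_subset_of_finite_of_subset_sUnion hn (finite_range x)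
    (range_subset_iff.2 hx𝒮)
  exact ⟨t, ⟨(subset_sUnion_of_mem ht).trans hsub,
    fun U hU => ⟨x ⟨U, hU⟩, hxt (mem_range_self _), hxU ⟨U, hU⟩⟩⟩, ht⟩

theorem closure_sUnion_mem_closure_vietoris {𝒮 : Set (Set α)} (hn : 𝒮.Nonempty)
    (hd : DirectedOn (· ⊆ ·) 𝒮) : closure (⋃₀ 𝒮) ∈ closure 𝒮 :=
  vietoris.specializes_closure.mem_closed isClosed_closure (sUnion_mem_closure_vietoris hn hd)

theorem sInter_mem_closure_vietoris [T2Space α] {𝒯 : Set (Set α)} (hn : 𝒯.Nonempty)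
    (hd : DirectedOn (· ⊇ ·) 𝒯) (hc : ∀ t ∈ 𝒯, IsCompact t) : ⋂₀ 𝒯 ∈ closure 𝒯 := by
  rw [vietoris.isTopologicalBasis.mem_closure_iff, forall_mem_image]
  rintro u ⟨-, hu⟩ ⟨hsub, hmeet⟩
  have := hn.to_subtype
  obtain ⟨⟨t, ht⟩, htu⟩ := exists_subset_nhds_of_isCompact hd.directed_val
    (fun t => hc t t.2) fun x hx => (isOpen_sUnion hu).mem_nhds
      (hsub (by rwa [sInter_eq_iInter]))
  exact ⟨t, ⟨htu, fun U hU => (hmeet U hU).mono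
    (inter_subset_inter_left _ (sInter_subset_of_mem ht))⟩, ht⟩

theorem IsCompact.isPreconnected_of_mem_closure [T2Space α] {K : Set α} (hK : IsCompact K)
    (h : K ∈ closure {s : Set α | IsPreconnected s}) : IsPreconnected K := by
  by_contra hKc
  obtain ⟨u, v, hu, hv, hKuv, ⟨a, haK, hau⟩, ⟨b, hbK, hbv⟩, huv⟩ : ∃ u v, IsOpen u ∧ IsOpen v ∧
      K ⊆ u ∪ v ∧ (K ∩ u).Nonempty ∧ (K ∩ v).Nonempty ∧ K ∩ (u ∩ v) = ∅ := by
    simpa [IsPreconnected, not_nonempty_iff_eq_empty] using hKc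
  have huv' : ∀ x ∈ K, x ∈ u → x ∉ v := fun x hxK hxu hxv =>
    eq_empty_iff_forall_notMem.1 huv x ⟨hxK, hxu, hxv⟩
  obtain ⟨U, V, hU, hV, hKU, hKV, hUV⟩ := SeparatedNhds.of_isCompact_isCompact
    (hK.diff hv) (hK.diff hu) (disjoint_left.2 fun x ⟨hxK, hxv⟩ ⟨_, hxu⟩ =>
      (hKuv hxK).elim hxu hxv)
  have hKUV : K ⊆ U ∪ V := fun x hxK => by
    by_cases hxu : x ∈ u
    · exact Or.inl (hKU ⟨hxK, huv' x hxK hxu⟩)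
    · exact Or.inr (hKV ⟨hxK, hxu⟩)
  obtain ⟨s, ⟨⟨hsUV, hsU⟩, hsV⟩, hs⟩ := mem_closure_iff.mp h
    ({s | s ⊆ U ∪ V} ∩ {s | (s ∩ U).Nonempty} ∩ {s | (s ∩ V).Nonempty})
    (((hU.union hV).powerset_vietoris.inter (vietoris.isOpen_inter_nonempty_of_isOpen hU)).inter
      (vietoris.isOpen_inter_nonempty_of_isOpen hV))
    ⟨⟨hKUV, a, haK, hKU ⟨haK, huv' a haK hau⟩⟩,
      b, hbK, hKV ⟨hbK, fun hbu => huv' b hbK hbu hbv⟩⟩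
  obtain ⟨x, -, hxU, hxV⟩ := hs U V hU hV hsUV hsU hsV
  exact hUV.ne_of_mem hxU hxV rfl

end Vietoris

theorem IsMaxChain.exists_mem_Ioo {α : Type*} [PartialOrder α] {s : Set α}
    (hs : IsMaxChain (· ≤ ·) s) {a b c : α} (ha : a ∈ s) (hb : b ∈ s) (hc : c ∈ Ioo a b) :
    ∃ d ∈ s, d ∈ Ioo a b := by
  by_cases! h : ∀ d ∈ s, d ≤ c ∨ c ≤ d
  · refine ⟨c, ?_, hc⟩
    rw [hs.2 (hs.1.insert fun d hd _ => (h d hd).symm) (subset_insert c s)]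
    exact mem_insert c s
  obtain ⟨d, hd, hdc, hcd⟩ := h
  have had : a ≤ d := (hs.1.total ha hd).resolve_right fun hda => hdc (hda.trans hc.1.le)
  have hdb : d ≤ b := (hs.1.total hd hb).resolve_right fun hbd => hcd (hc.2.le.trans hbd)
  exact ⟨d, hd, had.lt_of_ne fun h => hdc (h ▸ hc.1.le), hdb.lt_of_ne fun h => hcd (h ▸ hc.2.le)⟩

section Bumping

variable {α : Type*} [TopologicalSpace α]

theorem IsCompact.connectedComponentIn {K : Set α} (hK : IsCompact K) (x : α) :
    IsCompact (connectedComponentIn K x) := by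
  by_cases hx : x ∈ K
  · have := isCompact_iff_compactSpace.mp hK
    rw [connectedComponentIn_eq_image hx]
    exact isClosed_connectedComponent.isCompact.image continuous_subtype_val
  · rw [connectedComponentIn_eq_empty hx]
    exact isCompact_empty

theorem exists_isClopen_disjoint_of_disjoint_connectedComponent [T2Space α] [CompactSpace α]
    {x : α} {E : Set α} (hE : IsClosed E) (h : Disjoint (connectedComponent x) E) :
    ∃ D, IsClopen D ∧ x ∈ D ∧ Disjoint D E := by
  rw [connectedComponent_eq_iInter_isClopen, disjoint_iff_inter_eq_empty, inter_comm] at h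
  obtain ⟨u, hu⟩ := hE.isCompact.elim_finite_subfamily_closed _
    (fun s : {s // IsClopen s ∧ x ∈ s} => s.2.1.isClosed) h
  exact ⟨⋂ s ∈ u, s.1, isClopen_biInter_finset fun s _ => s.2.1, mem_iInter₂.2 fun s _ => s.2.2,
    by rwa [disjoint_iff_inter_eq_empty, inter_comm]⟩

/-- Boundary bumping: otherwise a clopen piece of `B \ W` around `a` missing `closure W` would be
clopen in `B`. -/
theorem connectedComponentIn_diff_inter_closure_nonempty [T2Space α] {B W : Set α}
    (hB : IsCompact B) (hBc : IsPreconnected B) (hW : IsOpen W) {a b : α} (ha : a ∈ B \ W)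
    (hb : b ∈ B ∩ W) : (connectedComponentIn (B \ W) a ∩ closure W).Nonempty := by
  have := isCompact_iff_compactSpace.mp (hB.diff hW)
  by_contra hne
  obtain ⟨D, hD, haD, hDW⟩ := exists_isClopen_disjoint_of_disjoint_connectedComponent
    (x := (⟨a, ha⟩ : ↥(B \ W))) (isClosed_closure.preimage continuous_subtype_val)
    (disjoint_left.2 fun y hy hyW => hne ⟨y, by
      rw [connectedComponentIn_eq_image ha]; exact mem_image_of_mem _ hy, hyW⟩)
  obtain ⟨O, hO, rfl⟩ := isOpen_induced_iff.mp hD.isOpen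
  have hDcl : IsClosed (Subtype.val '' (Subtype.val ⁻¹' O : Set ↥(B \ W))) :=
    (hD.isClosed.isCompact.image continuous_subtype_val).isClosed
  have hcover :
      B ⊆ (O ∩ (closure W)ᶜ) ∪ (Subtype.val '' (Subtype.val ⁻¹' O : Set ↥(B \ W)))ᶜ := by
    rintro x hx
    by_cases hxD : x ∈ Subtype.val '' (Subtype.val ⁻¹' O : Set ↥(B \ W))
    · obtain ⟨y, hyO, rfl⟩ := hxD
      exact Or.inl ⟨hyO, fun hyW => disjoint_left.1 hDW hyO hyW⟩
    · exact Or.inr hxD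
  obtain ⟨x, hxB, ⟨hxO, hxW⟩, hxD⟩ := hBc _ _ (hO.inter isClosed_closure.isOpen_compl)
    hDcl.isOpen_compl hcover
    ⟨a, ha.1, haD, fun haW => disjoint_left.1 hDW haD haW⟩
    ⟨b, hb.1, fun ⟨y, _, hy⟩ => y.2.2 (hy ▸ hb.2)⟩
  exact hxD ⟨⟨x, hxB, fun h => hxW (subset_closure h)⟩, hxO, rfl⟩

end Bumping

theorem vietoris_eq_topologicalSpace_vietoris (X : Type) [TopologicalSpace X] :
    vietoris X = TopologicalSpace.vietoris X := by
  unfold vietoris TopologicalSpace.vietoris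
  congr 1
  ext S
  simp only [mem_union, mem_ofPred, mem_image, eq_comm]
  rfl

namespace CX

variable {X : Type} [TopologicalSpace X]

theorem isInducing_val : IsInducing fun A : CX X => A.1 :=
  ⟨by rw [← vietoris_eq_topologicalSpace_vietoris]; rfl⟩

def toNonemptyCompacts (A : CX X) : NonemptyCompacts X := ⟨⟨A.1, A.2.1⟩, A.2.2.nonempty⟩

theorem range_toNonemptyCompacts :
    range (toNonemptyCompacts (X := X)) =
      {K : NonemptyCompacts X | IsPreconnected (K : Set X)} := by
  ext K
  refine ⟨?_, fun hK => ⟨⟨K, K.isCompact, K.nonempty, hK⟩, rfl⟩⟩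
  rintro ⟨A, rfl⟩
  exact A.2.2.isPreconnected

theorem isClosedEmbedding_toNonemptyCompacts [T2Space X] :
    IsClosedEmbedding (toNonemptyCompacts (X := X)) where
  eq_induced :=
    (NonemptyCompacts.isEmbedding_coe.isInducing.of_comp_iff.mp isInducing_val).eq_induced
  injective A B h := Subtype.ext congr(($h : Set X))
  isClosed_range := by
    rw [range_toNonemptyCompacts, ← closure_subset_iff_isClosed]
    intro K hK
    exact K.isCompact.isPreconnected_of_mem_closure <|
      closure_mono (image_subset_iff.2 fun _ h => h)
        (image_closure_subset_closure_image NonemptyCompacts.continuous_coe ⟨K, hK, rfl⟩)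

instance [T2Space X] [CompactSpace X] : CompactSpace (CX X) :=
  isClosedEmbedding_toNonemptyCompacts.compactSpace

theorem exists_isLUB_mem_closure [T2Space X] [CompactSpace X] {S : Set (CX X)}
    (hS : IsChain (· ≤ ·) S) (hne : S.Nonempty) : ∃ m, IsLUB S m ∧ m ∈ closure S := by
  have hd : DirectedOn (· ⊆ ·) (Subtype.val '' S) :=
    (hS.image_of_map_rel _ (· ⊆ ·) (fun A : CX X => A.1) fun _ _ h => h).directedOn
  have hconn : IsPreconnected (⋃₀ (Subtype.val '' S)) :=
    .sUnion_directed hd (by rintro _ ⟨B, -, rfl⟩; exact B.2.2.isPreconnected)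
  obtain ⟨A, hA⟩ := hne
  refine ⟨⟨closure (⋃₀ (Subtype.val '' S)), isClosed_closure.isCompact,
    (A.2.2.nonempty.mono (subset_sUnion_of_mem (mem_image_of_mem _ hA))).closure,
    hconn.closure⟩, ⟨fun B hB => ?_, fun q hq => ?_⟩, ?_⟩
  · exact (subset_sUnion_of_mem (mem_image_of_mem _ hB)).trans subset_closure
  · exact closure_minimal (sUnion_subset (by rintro _ ⟨B, hB, rfl⟩; exact hq hB)) q.2.1.isClosed
  · rw [isInducing_val.closure_eq_preimage_closure_image]
    exact closure_sUnion_mem_closure_vietoris ⟨_, mem_image_of_mem _ hA⟩ hd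

theorem exists_isGLB_mem_closure [T2Space X] {S : Set (CX X)} (hS : IsChain (· ≤ ·) S)
    (hne : S.Nonempty) : ∃ n, IsGLB S n ∧ n ∈ closure S := by
  have hd : DirectedOn (· ⊇ ·) (Subtype.val '' S) :=
    (hS.symm.image_of_map_rel _ (· ⊇ ·) (fun A : CX X => A.1) fun _ _ h => h).directedOn
  have hc : ∀ t ∈ Subtype.val '' S, IsCompact t := by
    rintro _ ⟨B, -, rfl⟩
    exact B.2.1
  have hmem := sInter_mem_closure_vietoris (hne.image _) hd hc
  have := (hne.image Subtype.val).to_subtype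
  obtain ⟨A, hA⟩ := hne
  have hcpt : IsCompact (⋂₀ (Subtype.val '' S)) :=
    A.2.1.of_isClosed_subset (isClosed_sInter fun t ht => (hc t ht).isClosed)
      (sInter_subset_of_mem (mem_image_of_mem _ hA))
  refine ⟨⟨⋂₀ (Subtype.val '' S), hcpt,
    IsCompact.nonempty_sInter_of_directed_nonempty_isCompact_isClosed hd
      (by rintro _ ⟨B, -, rfl⟩; exact B.2.2.nonempty) hc fun t ht => (hc t ht).isClosed,
    hcpt.isPreconnected_of_mem_closure
      (closure_mono (by rintro _ ⟨B, -, rfl⟩; exact B.2.2.isPreconnected) hmem)⟩,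
    ⟨fun B hB => sInter_subset_of_mem (mem_image_of_mem _ hB), fun q hq => ?_⟩, ?_⟩
  · exact subset_sInter (by rintro _ ⟨B, hB, rfl⟩; exact hq hB)
  · rwa [isInducing_val.closure_eq_preimage_closure_image]

instance [T2Space X] : DenselyOrdered (CX X) where
  dense A B hAB := by
    obtain ⟨b, hbB, hbA⟩ := exists_of_ssubset (show A.1 ⊂ B.1 from hAB)
    obtain ⟨W, U, hW, hU, hbW, hAU, hWU⟩ := SeparatedNhds.of_isCompact_isCompact
      isCompact_singleton A.2.1 (disjoint_singleton_left.2 hbA)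
    obtain ⟨a, haA⟩ := A.2.2.nonempty
    have hAK : A.1 ⊆ B.1 \ W := fun x hx =>
      ⟨hAB.le hx, fun hxW => hWU.ne_of_mem hxW (hAU hx) rfl⟩
    obtain ⟨c, hcC, hcW⟩ := connectedComponentIn_diff_inter_closure_nonempty B.2.1
      B.2.2.isPreconnected hW (hAK haA) ⟨hbB, hbW rfl⟩
    let C : CX X := ⟨connectedComponentIn (B.1 \ W) a, (B.2.1.diff hW).connectedComponentIn a,
      isConnected_connectedComponentIn_iff.2 (hAK haA)⟩
    have hCK : C.1 ⊆ B.1 \ W := connectedComponentIn_subset _ _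
    refine ⟨C, lt_of_le_of_ne (A.2.2.isPreconnected.subset_connectedComponentIn haA hAK) ?_,
      lt_of_le_of_ne (hCK.trans sdiff_subset) ?_⟩
    · intro hAC
      have hcA : c ∈ A.1 := by rw [hAC]; exact hcC
      exact (hWU.closure_left hU).ne_of_mem hcW (hAU hcA) rfl
    · intro hCB
      exact (hCK (hCB ▸ hbB)).2 (hbW rfl)

section MaxChain

variable [T2Space X] [CompactSpace X]

theorem inter_nonempty_of_isMaxChain {𝒜 P Q : Set (CX X)} (hchain : IsMaxChain (· ≤ ·) 𝒜)
    (h𝒜 : IsClosed 𝒜) (hP : IsClosed P) (hQ : IsClosed Q) (hcover : 𝒜 ⊆ P ∪ Q) {p q : CX X}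
    (hp : p ∈ 𝒜 ∩ P) (hq : q ∈ 𝒜 ∩ Q) (hpq : p ≤ q) : (𝒜 ∩ (P ∩ Q)).Nonempty := by
  by_contra hPQ
  obtain ⟨m, hm, hmS⟩ := exists_isLUB_mem_closure (S := 𝒜 ∩ P ∩ Iic q)
    (hchain.1.mono fun _ h => h.1.1) ⟨p, hp, hpq⟩
  have hmP : m ∈ 𝒜 ∩ P := closure_minimal inter_subset_left (h𝒜.inter hP) hmS
  have hmq : m ≤ q := hm.2 fun _ h => h.2
  obtain ⟨n, hn, hnT⟩ := exists_isGLB_mem_closure (S := 𝒜 ∩ Q ∩ Ici m)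
    (hchain.1.mono fun _ h => h.1.1) ⟨q, hq, hmq⟩
  have hnQ : n ∈ 𝒜 ∩ Q := closure_minimal inter_subset_left (h𝒜.inter hQ) hnT
  have hmn : m < n := (hn.2 fun _ h => h.2).lt_of_ne fun h => hPQ ⟨m, hmP.1, hmP.2, h ▸ hnQ.2⟩
  obtain ⟨c, hmc, hcn⟩ := exists_between hmn
  obtain ⟨d, hd, hmd, hdn⟩ := hchain.exists_mem_Ioo hmP.1 hnQ.1 ⟨hmc, hcn⟩
  rcases hcover hd with hdP | hdQ
  · exact hmd.not_ge (hm.1 ⟨⟨hd, hdP⟩, hdn.le.trans (hn.1 ⟨hq, hmq⟩)⟩)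
  · exact hdn.not_ge (hn.1 ⟨⟨hd, hdQ⟩, hmd.le⟩)

theorem isPreconnected_of_isMaxChain {𝒜 : Set (CX X)} (hchain : IsMaxChain (· ≤ ·) 𝒜)
    (h𝒜 : IsClosed 𝒜) : IsPreconnected 𝒜 := by
  rw [isPreconnected_closed_iff]
  rintro P Q hP hQ hcover ⟨p, hp⟩ ⟨q, hq⟩
  rcases hchain.1.total hp.1 hq.1 with hpq | hqp
  · exact inter_nonempty_of_isMaxChain hchain h𝒜 hP hQ hcover hp hq hpq
  · rw [inter_comm P]
    exact inter_nonempty_of_isMaxChain hchain h𝒜 hQ hP (union_comm P Q ▸ hcover) hq hp hqp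

end MaxChain

end CX

theorem stmt16 [T2Space X]
    (𝒜 : Set (CX X)) (hchain : IsMaxChain (· ≤ ·) 𝒜)
    (htop : whole X ∈ 𝒜)
    (hclosed : IsClosed 𝒜) :
    IsCompact 𝒜 ∧ IsConnected 𝒜 :=
  ⟨hclosed.isCompact, ⟨whole X, htop⟩, CX.isPreconnected_of_isMaxChain hchain hclosed⟩
end
end
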